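/- If f ∈ L²(ℝ) is supported in {|z| ≤ R} for some R ≥ 1, then for every γ ∈ (0, 2/5) one has ‖e^{it∂_z²/2}(z f)‖_{L^∞_z} ≲_γ R^{1-γ} |t|^{-1/2} ‖⟨z⟩^{9/10} f‖_{L²_z}. -/

import Mathlib

open MeasureTheory Complex

noncomputable section

/-- Fourier transform on ℝ (angular frequency convention). -/
def FT (f : ℝ → ℂ) (ζ : ℝ) : ℂ := ∫ z : ℝ, Complex.exp (-(Complex.I) * z * ζ) * f z

/-- Inverse Fourier transform on ℝ. -/
def IFT (g : ℝ → ℂ) (z : ℝ) : ℂ :=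
  (1 / (2 * Real.pi)) * ∫ ζ : ℝ, Complex.exp (Complex.I * z * ζ) * g ζ

/-- The free Schrödinger propagator `e^{it∂_z²/2}`, defined via the Fourier
multiplier `e^{-itζ²/2}`. -/
def schrod (t : ℝ) (f : ℝ → ℂ) : ℝ → ℂ :=
  IFT (fun ζ => Complex.exp (-(Complex.I) * t * ζ ^ 2 / 2) * FT f ζ)

/-- The weight `⟨z⟩^{9/10} = (1+z²)^{9/20}`. -/
def wt (z : ℝ) : ℝ := (1 + z ^ 2) ^ ((9 : ℝ) / 20)

-- Step: Gaussian-regularized Fubini computation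
lemma reg_bound (t : ℝ) (ht : t ≠ 0) (g : ℝ → ℂ) (hg : Integrable g) (z : ℝ) (e : ℝ) (he : 0 < e) :
    ‖∫ ζ : ℝ, Complex.exp (I * z * ζ) * Complex.exp (-(e:ℂ) * ζ ^ 2) *
        (Complex.exp (-(Complex.I) * t * ζ ^ 2 / 2) * FT g ζ)‖ ≤
      (2 * Real.pi / |t|) ^ ((1:ℝ)/2) * ∫ y : ℝ, ‖g y‖ := by
  set b : ℂ := (e : ℂ) + I * t / 2 with hbdef
  have hb : 0 < b.re := by simp [hbdef, he]
  have hbne : b ≠ 0 := by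
    intro h; rw [h] at hb; simp at hb
  -- kernel pointwise rewrite
  have hF : ∀ ζ : ℝ, Complex.exp (I * z * ζ) * Complex.exp (-(e:ℂ) * ζ ^ 2) *
      (Complex.exp (-(Complex.I) * t * ζ ^ 2 / 2) * FT g ζ) =
      ∫ y : ℝ, Complex.exp (I * ((z:ℂ) - y) * ζ) * Complex.exp (-b * ζ ^ 2) * g y := by
    intro ζ
    rw [FT, ← integral_const_mul, ← integral_const_mul]
    congr 1; funext y
    have h1 : Complex.exp (I * z * ζ) * Complex.exp (-(e:ℂ) * ζ ^ 2) *
        (Complex.exp (-(Complex.I) * t * ζ ^ 2 / 2) * (Complex.exp (-(Complex.I) * y * ζ) * g y))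
        = (Complex.exp (I * z * ζ) * (Complex.exp (-(e:ℂ) * ζ ^ 2) *
          (Complex.exp (-(Complex.I) * t * ζ ^ 2 / 2) * Complex.exp (-(Complex.I) * y * ζ)))) * g y := by
      ring
    rw [h1, show Complex.exp (I * ((z:ℂ) - y) * ζ) * Complex.exp (-b * ζ ^ 2) * g y
        = (Complex.exp (I * ((z:ℂ) - y) * ζ) * Complex.exp (-b * ζ ^ 2)) * g y from by ring]
    congr 1
    simp only [← Complex.exp_add]
    congr 1
    rw [hbdef]
    ring
  have hcont : Continuous (fun p : ℝ × ℝ => Complex.exp (I * ((z:ℂ) - p.2) * p.1) * Complex.exp (-b * p.1 ^ 2)) := by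
    fun_prop
  have hmeasF : AEStronglyMeasurable
      (fun p : ℝ × ℝ => Complex.exp (I * ((z:ℂ) - p.2) * p.1) * Complex.exp (-b * p.1 ^ 2) * g p.2)
      (volume.prod volume) :=
    hcont.aestronglyMeasurable.mul hg.aestronglyMeasurable.comp_snd
  have hnorm1 : ∀ (c : ℝ) (ζ : ℝ), ‖Complex.exp (I * (c:ℂ) * ζ)‖ = 1 := by
    intro c ζ
    rw [Complex.norm_exp]
    norm_num [Complex.mul_re]
  have hnorm2 : ∀ ζ : ℝ, ‖Complex.exp (-b * (ζ:ℂ) ^ 2)‖ = Real.exp (-e * ζ ^ 2) := by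
    intro ζ
    rw [Complex.norm_exp]
    congr 1
    rw [hbdef]
    simp [Complex.mul_re, Complex.add_re, ← Complex.ofReal_pow]
  have hIF : Integrable
      (fun p : ℝ × ℝ => Complex.exp (I * ((z:ℂ) - p.2) * p.1) * Complex.exp (-b * p.1 ^ 2) * g p.2)
      (volume.prod volume) := by
    have hdom : Integrable (fun p : ℝ × ℝ => Real.exp (-e * p.1 ^ 2) * ‖g p.2‖)
        (volume.prod volume) := (integrable_exp_neg_mul_sq he).mul_prod hg.norm
    refine hdom.mono' hmeasF ?_
    filter_upwards with p
    rw [norm_mul, norm_mul]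
    have h1 : ‖Complex.exp (I * ((z:ℂ) - p.2) * p.1)‖ = 1 := by
      have : ((z:ℂ) - p.2) = ((z - p.2 : ℝ) : ℂ) := by push_cast; ring
      rw [this]; exact hnorm1 _ _
    rw [h1, hnorm2, one_mul]
  have hswap : (∫ ζ : ℝ, ∫ y : ℝ, Complex.exp (I * ((z:ℂ) - y) * ζ) * Complex.exp (-b * ζ ^ 2) * g y)
      = ∫ y : ℝ, ∫ ζ : ℝ, Complex.exp (I * ((z:ℂ) - y) * ζ) * Complex.exp (-b * ζ ^ 2) * g y :=
    integral_integral_swap hIF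
  have hinner : ∀ y : ℝ, (∫ ζ : ℝ, Complex.exp (I * ((z:ℂ) - y) * ζ) * Complex.exp (-b * ζ ^ 2) * g y)
      = ((↑Real.pi / b) ^ (1/2 : ℂ) * Complex.exp (-((z:ℂ) - y) ^ 2 / (4 * b))) * g y := by
    intro y
    rw [integral_mul_const, fourierIntegral_gaussian hb ((z:ℂ) - y)]
  have hbabs : ‖b‖ ≥ |t| / 2 := by
    have := Complex.abs_im_le_norm b
    have him : b.im = t / 2 := by rw [hbdef]; simp
    rw [him] at this
    calc |t| / 2 = |t / 2| := by rw [abs_div]; norm_num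
    _ ≤ ‖b‖ := this
  have hK : ∀ y : ℝ, ‖((↑Real.pi / b) ^ (1/2 : ℂ) * Complex.exp (-((z:ℂ) - y) ^ 2 / (4 * b))) * g y‖
      ≤ (2 * Real.pi / |t|) ^ ((1:ℝ)/2) * ‖g y‖ := by
    intro y
    rw [norm_mul, norm_mul]
    have h2 : ‖Complex.exp (-((z:ℂ) - y) ^ 2 / (4 * b))‖ ≤ 1 := by
      rw [Complex.norm_exp, Real.exp_le_one_iff]
      have : -((z:ℂ) - y) ^ 2 = ((-(z - y) ^ 2 : ℝ) : ℂ) := by push_cast; ring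
      rw [this, Complex.div_re]
      have h4b : (4 * b).re = 4 * e := by rw [hbdef]; simp
      simp only [Complex.ofReal_re, Complex.ofReal_im, zero_mul, zero_div, add_zero, h4b]
      apply div_nonpos_of_nonpos_of_nonneg
      · nlinarith [sq_nonneg (z - y), he.le]
      · exact Complex.normSq_nonneg _
    have h1 : ‖(↑Real.pi / b) ^ (1/2 : ℂ)‖ ≤ (2 * Real.pi / |t|) ^ ((1:ℝ)/2) := by
      have : ((1:ℂ)/2) = ((1/2 : ℝ) : ℂ) := by push_cast; ring
      rw [this, Complex.norm_cpow_real]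
      apply Real.rpow_le_rpow (norm_nonneg _) _ (by norm_num)
      rw [norm_div, Complex.norm_real, Real.norm_eq_abs, abs_of_pos Real.pi_pos]
      have habs0 : 0 < ‖b‖ := (div_pos (abs_pos.mpr ht) two_pos).trans_le hbabs
      rw [div_le_div_iff₀ habs0 (abs_pos.mpr ht)]
      calc Real.pi * |t| = (|t| / 2) * (2 * Real.pi) := by ring
      _ ≤ ‖b‖ * (2 * Real.pi) := by
          apply mul_le_mul_of_nonneg_right hbabs (by positivity)
      _ = 2 * Real.pi * ‖b‖ := by ring
    calc ‖(↑Real.pi / b) ^ (1/2 : ℂ)‖ * ‖Complex.exp (-((z:ℂ) - y) ^ 2 / (4 * b))‖ * ‖g y‖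
        ≤ (2 * Real.pi / |t|) ^ ((1:ℝ)/2) * 1 * ‖g y‖ := by
          apply mul_le_mul_of_nonneg_right _ (norm_nonneg _)
          exact mul_le_mul h1 h2 (norm_nonneg _) (by positivity)
      _ = (2 * Real.pi / |t|) ^ ((1:ℝ)/2) * ‖g y‖ := by ring
  calc ‖∫ ζ : ℝ, Complex.exp (I * z * ζ) * Complex.exp (-(e:ℂ) * ζ ^ 2) *
        (Complex.exp (-(Complex.I) * t * ζ ^ 2 / 2) * FT g ζ)‖
      = ‖∫ y : ℝ, ((↑Real.pi / b) ^ (1/2 : ℂ) * Complex.exp (-((z:ℂ) - y) ^ 2 / (4 * b))) * g y‖ := by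
        rw [funext hF, hswap, funext hinner]
    _ ≤ ∫ y : ℝ, ‖((↑Real.pi / b) ^ (1/2 : ℂ) * Complex.exp (-((z:ℂ) - y) ^ 2 / (4 * b))) * g y‖ :=
        norm_integral_le_integral_norm _
    _ ≤ ∫ y : ℝ, (2 * Real.pi / |t|) ^ ((1:ℝ)/2) * ‖g y‖ := by
        apply integral_mono_of_nonneg
        · filter_upwards with y; exact norm_nonneg _
        · exact hg.norm.const_mul _
        · filter_upwards with y; exact hK y
    _ = (2 * Real.pi / |t|) ^ ((1:ℝ)/2) * ∫ y : ℝ, ‖g y‖ := integral_const_mul _ _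


lemma schrod_pointwise (t : ℝ) (ht : t ≠ 0) (g : ℝ → ℂ) (hg : Integrable g) (z : ℝ) :
    ‖schrod t g z‖ ≤ (2 * Real.pi)⁻¹ * (2 * Real.pi / |t|) ^ ((1:ℝ)/2) * ∫ y : ℝ, ‖g y‖ := by
  set h : ℝ → ℂ := fun ζ => Complex.exp (-(Complex.I) * t * ζ ^ 2 / 2) * FT g ζ with hh
  have hval : schrod t g z = (1 / (2 * (Real.pi:ℂ))) *
      ∫ ζ : ℝ, Complex.exp (I * z * ζ) * h ζ := rfl
  have hcoef : ‖(1 / (2 * (Real.pi:ℂ)))‖ = (2 * Real.pi)⁻¹ := by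
    simp [norm_div, Complex.norm_real, Complex.norm_two,
      abs_of_pos Real.pi_pos, one_div]
  have hnorm1 : ∀ (c ζ : ℝ), ‖Complex.exp (I * (c:ℂ) * ζ)‖ = 1 := by
    intro c ζ
    rw [Complex.norm_exp]
    norm_num [Complex.mul_re]
  by_cases hInt : Integrable h volume
  · -- integrable case: limit of regularized integrals
    have key : ∀ n : ℕ, ‖∫ ζ : ℝ, Complex.exp (I * z * ζ) *
        Complex.exp (-((((n:ℝ)+1)⁻¹ : ℝ):ℂ) * ζ ^ 2) * h ζ‖ ≤
        (2 * Real.pi / |t|) ^ ((1:ℝ)/2) * ∫ y : ℝ, ‖g y‖ := by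
      intro n
      have hpos : (0:ℝ) < ((n:ℝ)+1)⁻¹ := by positivity
      exact reg_bound t ht g hg z _ hpos
    have tends : Filter.Tendsto (fun n : ℕ => ∫ ζ : ℝ, Complex.exp (I * z * ζ) *
        Complex.exp (-((((n:ℝ)+1)⁻¹ : ℝ):ℂ) * ζ ^ 2) * h ζ) Filter.atTop
        (nhds (∫ ζ : ℝ, Complex.exp (I * z * ζ) * h ζ)) := by
      apply tendsto_integral_of_dominated_convergence (fun ζ => ‖h ζ‖)
      · intro n
        exact ((by fun_prop : Continuous (fun ζ : ℝ => Complex.exp (I * z * ζ) *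
          Complex.exp (-((((n:ℝ)+1)⁻¹ : ℝ):ℂ) * ζ ^ 2))).aestronglyMeasurable).mul
          hInt.aestronglyMeasurable
      · exact hInt.norm
      · intro n
        filter_upwards with ζ
        rw [norm_mul, norm_mul, hnorm1, one_mul]
        have : ‖Complex.exp (-((((n:ℝ)+1)⁻¹ : ℝ):ℂ) * ζ ^ 2)‖ ≤ 1 := by
          rw [Complex.norm_exp, Real.exp_le_one_iff]
          have : -((((n:ℝ)+1)⁻¹ : ℝ):ℂ) * (ζ:ℂ) ^ 2 = ((-(((n:ℝ)+1)⁻¹ * ζ ^ 2) : ℝ) : ℂ) := by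
            push_cast; ring
          rw [this, Complex.ofReal_re]
          refine neg_nonpos.mpr (by positivity)
        calc ‖Complex.exp (-((((n:ℝ)+1)⁻¹ : ℝ):ℂ) * ζ ^ 2)‖ * ‖h ζ‖ ≤ 1 * ‖h ζ‖ :=
              mul_le_mul_of_nonneg_right this (norm_nonneg _)
          _ = ‖h ζ‖ := one_mul _
      · filter_upwards with ζ
        have h0 : Filter.Tendsto (fun n : ℕ => ((n:ℝ)+1)⁻¹) Filter.atTop (nhds 0) := by
          simpa only [one_div] using tendsto_one_div_add_atTop_nhds_zero_nat (𝕜 := ℝ)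
        have hc : Continuous (fun e : ℝ => Complex.exp (I * z * ζ) *
            Complex.exp (-((e:ℝ):ℂ) * ζ ^ 2) * h ζ) := by fun_prop
        have h1 := (hc.tendsto 0).comp h0
        simp only [Function.comp_def, Complex.ofReal_zero, neg_zero, zero_mul, neg_mul,
          Complex.exp_zero, mul_one] at h1
        refine h1.congr fun n => ?_
        push_cast
        ring_nf
    have hlim : ‖∫ ζ : ℝ, Complex.exp (I * z * ζ) * h ζ‖ ≤
        (2 * Real.pi / |t|) ^ ((1:ℝ)/2) * ∫ y : ℝ, ‖g y‖ :=
      le_of_tendsto tends.norm (Filter.Eventually.of_forall key)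
    rw [hval, norm_mul, hcoef, mul_assoc]
    exact mul_le_mul_of_nonneg_left hlim (by positivity)
  · -- non-integrable case: the integral is zero
    have hni : ¬ Integrable (fun ζ : ℝ => Complex.exp (I * z * ζ) * h ζ) volume := by
      intro hc
      apply hInt
      have : Integrable (fun ζ : ℝ => Complex.exp (-(I * z * ζ)) *
          (Complex.exp (I * z * ζ) * h ζ)) volume := by
        apply hc.bdd_mul (c := 1)
        · exact (by fun_prop : Continuous fun ζ : ℝ =>
            Complex.exp (-(I * z * ζ))).aestronglyMeasurable
        · filter_upwards with ζ
          have : -(I * (z:ℂ) * ζ) = I * ((-z : ℝ):ℂ) * ζ := by push_cast; ring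
          rw [this, hnorm1]
      refine this.congr ?_
      filter_upwards with ζ
      rw [← mul_assoc, ← Complex.exp_add]
      simp
    rw [hval, integral_undef hni, mul_zero, norm_zero]
    have h3 : (0:ℝ) ≤ ∫ y : ℝ, ‖g y‖ := integral_nonneg (fun y => norm_nonneg _)
    have h2 : (0:ℝ) ≤ (2 * Real.pi / |t|) ^ ((1:ℝ)/2) := Real.rpow_nonneg (by positivity) _
    exact mul_nonneg (mul_nonneg (by positivity) h2) h3

/-- If `f ∈ L²(ℝ)` is supported in `{|z| ≤ R}` with `R ≥ 1`, then for every
`γ ∈ (0, 2/5)`: `‖e^{it∂_z²/2}(z f)‖_{L^∞} ≲_γ R^{1-γ} |t|^{-1/2} ‖⟨z⟩^{9/10} f‖_{L²}`. -/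
theorem dispersive_estimate_support_inside :
    ∀ γ : ℝ, γ ∈ Set.Ioo (0 : ℝ) (2 / 5) →
    ∃ C : ℝ, 0 < C ∧ ∀ (R : ℝ), 1 ≤ R → ∀ (f : ℝ → ℂ), MemLp f 2 (volume : Measure ℝ) →
      (∀ z : ℝ, R < |z| → f z = 0) →
      ∀ t : ℝ, t ≠ 0 →
        eLpNorm (schrod t (fun z => (z : ℂ) * f z)) ⊤ volume ≤
          ENNReal.ofReal (C * R ^ (1 - γ) * |t| ^ (-(1 : ℝ) / 2)) *
            eLpNorm (fun z => (wt z : ℂ) * f z) 2 volume := by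
  intro γ hγ
  refine ⟨4 * ((2 * Real.pi)⁻¹ * (2 * Real.pi) ^ ((1:ℝ)/2)), by positivity, ?_⟩
  intro R hR f hf hsupp t ht
  have hRpos : (0:ℝ) < R := lt_of_lt_of_le one_pos hR
  set g : ℝ → ℂ := fun z => (z:ℂ) * f z with hgdef
  have hmf := hf.aestronglyMeasurable
  have hgm : AEStronglyMeasurable g volume :=
    (Complex.continuous_ofReal.aestronglyMeasurable).mul hmf
  -- integrability of g
  have hfIcc : IntegrableOn f (Set.Icc (-R) R) volume := by
    haveI : Fact (volume (Set.Icc (-R) R) < ⊤) := ⟨measure_Icc_lt_top⟩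
    exact (hf.restrict _).integrable (by norm_num)
  have hgle : ∀ y : ℝ, ‖g y‖ ≤ R * ‖f y‖ := by
    intro y
    rw [hgdef]
    simp only [norm_mul, Complex.norm_real, Real.norm_eq_abs]
    by_cases hy : |y| ≤ R
    · exact mul_le_mul_of_nonneg_right hy (norm_nonneg _)
    · rw [hsupp y (not_le.mp hy)]
      simp
  have hgIcc : IntegrableOn g (Set.Icc (-R) R) volume := by
    refine Integrable.mono' (hfIcc.norm.const_mul R) hgm.restrict ?_
    filter_upwards with y
    exact hgle y
  have hgind : g = Set.indicator (Set.Icc (-R) R) g := by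
    funext y
    by_cases hy : y ∈ Set.Icc (-R) R
    · rw [Set.indicator_of_mem hy]
    · rw [Set.indicator_of_notMem hy, hgdef]
      have hy' : R < |y| := by
        rw [Set.mem_Icc, ← abs_le] at hy
        exact not_le.mp hy
      simp [hsupp y hy']
  have hgint : Integrable g volume := by
    rw [hgind]
    exact hgIcc.integrable_indicator measurableSet_Icc
  -- sup-norm bound
  have hpt : ∀ z : ℝ, ‖schrod t g z‖ ≤
      (2 * Real.pi)⁻¹ * (2 * Real.pi / |t|) ^ ((1:ℝ)/2) * ∫ y : ℝ, ‖g y‖ :=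
    fun z => schrod_pointwise t ht g hgint z
  have htop : eLpNorm (schrod t g) ⊤ volume ≤
      ENNReal.ofReal ((2 * Real.pi)⁻¹ * (2 * Real.pi / |t|) ^ ((1:ℝ)/2) * ∫ y : ℝ, ‖g y‖) := by
    rw [eLpNorm_exponent_top]
    exact eLpNormEssSup_le_of_ae_bound (Filter.Eventually.of_forall hpt)
  have hg1 : ENNReal.ofReal (∫ y : ℝ, ‖g y‖) = eLpNorm g 1 volume := by
    rw [eLpNorm_one_eq_lintegral_enorm]
    exact ofReal_integral_norm_eq_lintegral_enorm hgint
  -- Cauchy-Schwarz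
  set u : ℝ → ℝ := Set.indicator (Set.Icc (-R) R) (fun y => y / wt y) with hudef
  have hwtc : Continuous wt := by
    apply Continuous.rpow_const (by fun_prop)
    intro x; left; positivity
  have hwtpos : ∀ y : ℝ, 0 < wt y := fun y => Real.rpow_pos_of_pos (by positivity) _
  have hum : AEStronglyMeasurable u volume :=
    ((continuous_id.div hwtc (fun y => (hwtpos y).ne')).aestronglyMeasurable).indicator
      measurableSet_Icc
  have hwf : AEStronglyMeasurable (fun z => (wt z : ℂ) * f z) volume :=
    ((Complex.continuous_ofReal.comp hwtc).aestronglyMeasurable).mul hmf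
  have hgeq : g = fun y => u y • ((wt y : ℂ) * f y) := by
    funext y
    by_cases hy : y ∈ Set.Icc (-R) R
    · rw [hudef]
      simp only [Set.indicator_of_mem hy, hgdef, Complex.real_smul]
      have hne : ((wt y : ℝ) : ℂ) ≠ 0 := Complex.ofReal_ne_zero.mpr (hwtpos y).ne'
      push_cast
      field_simp
    · rw [hudef]
      have hy' : R < |y| := by
        rw [Set.mem_Icc, ← abs_le] at hy
        exact not_le.mp hy
      simp [Set.indicator_of_notMem hy, hgdef, hsupp y hy']
  have holder : eLpNorm g 1 volume ≤
      eLpNorm u 2 volume * eLpNorm (fun z => (wt z : ℂ) * f z) 2 volume := by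
    rw [hgeq]
    haveI : ENNReal.HolderTriple 2 2 1 := ⟨by rw [inv_one]; exact ENNReal.inv_two_add_inv_two⟩
    refine (eLpNorm_le_eLpNorm_mul_eLpNorm'_of_norm (p := 2) (q := 2) (r := 1) hum hwf
      (fun a c => a • c) 1 ?_).trans (le_of_eq ?_)
    · filter_upwards with y
      rw [norm_smul, NNReal.coe_one, one_mul]
    · rw [ENNReal.coe_one, one_mul]
  -- bound on eLpNorm u
  have hubd : ∀ y : ℝ, ‖u y‖ ≤
      ‖Set.indicator (Set.Icc (-R) R) (fun _ => (2 * R ^ ((1:ℝ)/10) : ℝ)) y‖ := by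
    intro y
    by_cases hy : y ∈ Set.Icc (-R) R
    · rw [hudef]
      simp only [Set.indicator_of_mem hy, Real.norm_eq_abs]
      have hyR : |y| ≤ R := by rwa [abs_le, ← Set.mem_Icc]
      have h0 : (0:ℝ) < 1 + y ^ 2 := by positivity
      have h1 : |y / wt y| = |y| / wt y := by
        rw [abs_div, abs_of_pos (hwtpos y)]
      have h2 : |y| ≤ (1 + y ^ 2) ^ ((1:ℝ)/2) := by
        rw [← Real.sqrt_eq_rpow]
        calc |y| = Real.sqrt (y ^ 2) := (Real.sqrt_sq_eq_abs y).symm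
          _ ≤ Real.sqrt (1 + y ^ 2) := Real.sqrt_le_sqrt (by nlinarith)
      have h3 : |y| / wt y ≤ (1 + y ^ 2) ^ ((1:ℝ)/20) := by
        rw [div_le_iff₀ (hwtpos y), wt]
        calc |y| ≤ (1 + y ^ 2) ^ ((1:ℝ)/2) := h2
          _ = (1 + y ^ 2) ^ ((1:ℝ)/20) * (1 + y ^ 2) ^ ((9:ℝ)/20) := by
            rw [← Real.rpow_add h0]; norm_num
      have h4 : (1 + y ^ 2) ^ ((1:ℝ)/20) ≤ (2 * R ^ 2) ^ ((1:ℝ)/20) := by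
        apply Real.rpow_le_rpow h0.le _ (by norm_num)
        nlinarith [_root_.sq_abs y, mul_nonneg (sub_nonneg.mpr hyR) (add_nonneg hRpos.le (abs_nonneg y)),
          sq_nonneg (R - 1)]
      have h5 : ((2 * R ^ 2) : ℝ) ^ ((1:ℝ)/20) = 2 ^ ((1:ℝ)/20) * R ^ ((1:ℝ)/10) := by
        rw [Real.mul_rpow (by norm_num) (by positivity), ← Real.rpow_natCast R 2,
          ← Real.rpow_mul hRpos.le]
        norm_num
      have h6 : (2:ℝ) ^ ((1:ℝ)/20) ≤ 2 := by
        calc (2:ℝ) ^ ((1:ℝ)/20) ≤ 2 ^ (1:ℝ) :=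
            Real.rpow_le_rpow_of_exponent_le (by norm_num) (by norm_num)
          _ = 2 := Real.rpow_one 2
      have h7 : |2 * R ^ ((1:ℝ)/10)| = 2 * R ^ ((1:ℝ)/10) := abs_of_pos (by positivity)
      rw [h1, h7]
      calc |y| / wt y ≤ (1 + y ^ 2) ^ ((1:ℝ)/20) := h3
        _ ≤ 2 ^ ((1:ℝ)/20) * R ^ ((1:ℝ)/10) := by rw [← h5]; exact h4
        _ ≤ 2 * R ^ ((1:ℝ)/10) := by
            apply mul_le_mul_of_nonneg_right h6 (by positivity)
    · rw [hudef]
      simp [Set.indicator_of_notMem hy]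
  have hγ2 : (3:ℝ)/5 ≤ 1 - γ := by
    have := hγ.2
    linarith
  have hreal : 2 * R ^ ((1:ℝ)/10) * (2 * R) ^ ((1:ℝ)/2) ≤ 4 * R ^ ((1:ℝ) - γ) := by
    have e1 : ((2 * R) : ℝ) ^ ((1:ℝ)/2) = 2 ^ ((1:ℝ)/2) * R ^ ((1:ℝ)/2) :=
      Real.mul_rpow (by norm_num) hRpos.le
    have e2 : (2:ℝ) ^ ((1:ℝ)/2) ≤ 2 := by
      calc (2:ℝ) ^ ((1:ℝ)/2) ≤ 2 ^ (1:ℝ) :=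
          Real.rpow_le_rpow_of_exponent_le (by norm_num) (by norm_num)
        _ = 2 := Real.rpow_one 2
    have e3 : R ^ ((1:ℝ)/10) * R ^ ((1:ℝ)/2) = R ^ ((3:ℝ)/5) := by
      rw [← Real.rpow_add hRpos]; norm_num
    have e4 : R ^ ((3:ℝ)/5) ≤ R ^ ((1:ℝ) - γ) :=
      Real.rpow_le_rpow_of_exponent_le hR hγ2
    have h10 : (0:ℝ) ≤ R ^ ((1:ℝ)/10) := by positivity
    have h12 : (0:ℝ) ≤ R ^ ((1:ℝ)/2) := by positivity
    calc 2 * R ^ ((1:ℝ)/10) * (2 * R) ^ ((1:ℝ)/2)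
        = 2 * R ^ ((1:ℝ)/10) * (2 ^ ((1:ℝ)/2) * R ^ ((1:ℝ)/2)) := by rw [e1]
      _ ≤ 2 * R ^ ((1:ℝ)/10) * (2 * R ^ ((1:ℝ)/2)) := by
          apply mul_le_mul_of_nonneg_left _ (by positivity)
          exact mul_le_mul_of_nonneg_right e2 h12
      _ = 4 * (R ^ ((1:ℝ)/10) * R ^ ((1:ℝ)/2)) := by ring
      _ = 4 * R ^ ((3:ℝ)/5) := by rw [e3]
      _ ≤ 4 * R ^ ((1:ℝ) - γ) := by linarith [e4]
  have hu2 : eLpNorm u 2 volume ≤ ENNReal.ofReal (4 * R ^ ((1:ℝ) - γ)) := by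
    calc eLpNorm u 2 volume
        ≤ eLpNorm (Set.indicator (Set.Icc (-R) R) (fun _ => (2 * R ^ ((1:ℝ)/10) : ℝ))) 2
          volume := eLpNorm_mono hubd
      _ = ‖(2 * R ^ ((1:ℝ)/10) : ℝ)‖ₑ * volume (Set.Icc (-R) R) ^ (1 / (2 : ENNReal).toReal) :=
          eLpNorm_indicator_const measurableSet_Icc (by norm_num) (by norm_num)
      _ = ENNReal.ofReal (2 * R ^ ((1:ℝ)/10)) * ENNReal.ofReal ((2 * R) ^ ((1:ℝ)/2)) := by
          rw [Real.volume_Icc]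
          have : R - (-R) = 2 * R := by ring
          rw [this]
          congr 1
          · rw [← ofReal_norm_eq_enorm, Real.norm_eq_abs, abs_of_pos (by positivity)]
          · rw [← ENNReal.ofReal_rpow_of_pos (by positivity)]
            norm_num
      _ = ENNReal.ofReal (2 * R ^ ((1:ℝ)/10) * (2 * R) ^ ((1:ℝ)/2)) := by
          rw [← ENNReal.ofReal_mul (by positivity)]
      _ ≤ ENNReal.ofReal (4 * R ^ ((1:ℝ) - γ)) := ENNReal.ofReal_le_ofReal hreal
  -- assemble
  have hint0 : (0:ℝ) ≤ ∫ y : ℝ, ‖g y‖ := integral_nonneg fun y => norm_nonneg _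
  have hconst : ((2 * Real.pi)⁻¹ * (2 * Real.pi / |t|) ^ ((1:ℝ)/2)) * (4 * R ^ ((1:ℝ) - γ)) =
      4 * ((2 * Real.pi)⁻¹ * (2 * Real.pi) ^ ((1:ℝ)/2)) * R ^ (1 - γ) * |t| ^ (-(1:ℝ) / 2) := by
    rw [Real.div_rpow (by positivity) (abs_nonneg t)]
    rw [show (-(1:ℝ)/2) = -((1:ℝ)/2) by norm_num, Real.rpow_neg (abs_nonneg t)]
    field_simp
  calc eLpNorm (schrod t g) ⊤ volume
      ≤ ENNReal.ofReal ((2 * Real.pi)⁻¹ * (2 * Real.pi / |t|) ^ ((1:ℝ)/2) * ∫ y : ℝ, ‖g y‖) :=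
        htop
    _ = ENNReal.ofReal ((2 * Real.pi)⁻¹ * (2 * Real.pi / |t|) ^ ((1:ℝ)/2)) *
        eLpNorm g 1 volume := by
        rw [← hg1, ← ENNReal.ofReal_mul]
        positivity
    _ ≤ ENNReal.ofReal ((2 * Real.pi)⁻¹ * (2 * Real.pi / |t|) ^ ((1:ℝ)/2)) *
        (eLpNorm u 2 volume * eLpNorm (fun z => (wt z : ℂ) * f z) 2 volume) :=
        mul_le_mul_right holder _
    _ ≤ ENNReal.ofReal ((2 * Real.pi)⁻¹ * (2 * Real.pi / |t|) ^ ((1:ℝ)/2)) *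
        (ENNReal.ofReal (4 * R ^ ((1:ℝ) - γ)) * eLpNorm (fun z => (wt z : ℂ) * f z) 2 volume) :=
        mul_le_mul_right (mul_le_mul_left hu2 _) _
    _ = ENNReal.ofReal (((2 * Real.pi)⁻¹ * (2 * Real.pi / |t|) ^ ((1:ℝ)/2)) *
        (4 * R ^ ((1:ℝ) - γ))) * eLpNorm (fun z => (wt z : ℂ) * f z) 2 volume := by
        conv_rhs => rw [ENNReal.ofReal_mul
          (by positivity : (0:ℝ) ≤ (2 * Real.pi)⁻¹ * (2 * Real.pi / |t|) ^ ((1:ℝ)/2))]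
        rw [mul_assoc]
    _ = ENNReal.ofReal (4 * ((2 * Real.pi)⁻¹ * (2 * Real.pi) ^ ((1:ℝ)/2)) * R ^ (1 - γ) *
        |t| ^ (-(1:ℝ) / 2)) * eLpNorm (fun z => (wt z : ℂ) * f z) 2 volume := by
        rw [hconst]
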